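/- Let M be a positive integer and x, y, R, S ≥ 0 be integers with R + S = M, x ≤ R, y ≤ S. Let d be the Euclidean distance from the point (x, y) ∈ ℤ² to the line in ℝ² through (0,0) and (R,S). Then binom(x+y, x) · binom(R+S-x-y, R-x) / binom(R+S, R) ≤ 48·M·exp(−d²/(4M)). -/

import Mathlib

open Real

/-- The point `(u, v)` of the Euclidean plane. -/
noncomputable def pt (u v : ℝ) : EuclideanSpace ℝ (Fin 2) :=
  (WithLp.equiv 2 (Fin 2 → ℝ)).symm ![u, v]

/-!
Write `u = R - x`, `v = S - y` and `H(a, b) = (a + b) log (a + b) - a log a - b log b`.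
Since `(a + b).choose a` lies between `exp H(a, b) / (a + b + 1)` and `exp H(a, b)`, the ratio
is at most `(M + 1) exp (H(x, y) + H(u, v) - H(R, S))`. With `r = R / M` this exponent is minus
the sum of two binary Kullback–Leibler divergences,
`(x + y) D(x / (x + y) ‖ r) + (u + v) D(u / (u + v) ‖ r)`, and Pinsker's inequality bounds it by
`-(x v - y u)² / (2 M³)`. Finally `x v - y u = x S - y R`, and the distance from `(x, y)` to the
line is `|x S - y R| / √(R² + S²) ≤ √2 |x S - y R| / M`.
-/

lemma two_mul_sub_div_add_le_log_div {a α : ℝ} (hα : 0 < α) (h : α ≤ a) :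
    2 * (a - α) / (a + α) ≤ log (a / α) := by
  have ha : 0 < a := hα.trans_le h
  have hs : 0 < a + α := by linarith
  have hx1 : |(a - α) / (a + α)| < 1 := by
    rw [abs_of_nonneg (div_nonneg (by linarith) hs.le), div_lt_one hs]
    linarith
  -- the first term of `log ((1 + z) / (1 - z)) = 2 ∑ z ^ (2 k + 1) / (2 k + 1)`
  have hseries := le_hasSum (hasSum_log_sub_log_of_abs_lt_one hx1) 0 fun _ _ => by positivity
  have hlog : log (1 + (a - α) / (a + α)) - log (1 - (a - α) / (a + α)) = log (a / α) := by
    rw [show 1 + (a - α) / (a + α) = 2 * a / (a + α) by field_simp; ring,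
      show 1 - (a - α) / (a + α) = 2 * α / (a + α) by field_simp; ring,
      ← log_div (by positivity) (by positivity)]
    congr 1
    field_simp
  rw [hlog] at hseries
  simpa [mul_div_assoc] using hseries

lemma sub_le_mul_log_div {b β : ℝ} (hb : 0 ≤ b) (hβ : 0 < β) :
    b - β ≤ b * log (b / β) := by
  have h := InformationTheory.klFun_nonneg (div_nonneg hb hβ.le)
  rw [InformationTheory.klFun_apply] at h
  have h' := mul_nonneg hβ.le h
  field_simp at h'
  linarith

theorem binary_pinsker {a b α β : ℝ} (ha : 0 ≤ a) (hb : 0 ≤ b) (hα : 0 < α) (hβ : 0 < β)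
    (h : a + b = α + β) :
    (a - α) ^ 2 / (2 * (a + b)) ≤ a * log (a / α) + b * log (b / β) := by
  wlog hle : α ≤ a generalizing a b α β
  · have hsym := this hb ha hβ hα (by linarith) (by linarith)
    rwa [show (b - β) ^ 2 = (a - α) ^ 2 by rw [show b - β = -(a - α) by linarith, neg_sq],
      add_comm b, add_comm (b * _)] at hsym
  have ha' : 0 < a + α := by linarith
  have hlog : 2 * a * (a - α) / (a + α) ≤ a * log (a / α) := by
    calc 2 * a * (a - α) / (a + α) = a * (2 * (a - α) / (a + α)) := by ring
      _ ≤ a * log (a / α) := by gcongr; exact two_mul_sub_div_add_le_log_div hα hle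
  calc (a - α) ^ 2 / (2 * (a + b)) ≤ (a - α) ^ 2 / (a + α) := by
        gcongr; linarith
    _ = 2 * a * (a - α) / (a + α) + (b - β) := by
        rw [show b - β = α - a by linarith]
        field_simp
        ring
    _ ≤ a * log (a / α) + b * log (b / β) := add_le_add hlog (sub_le_mul_log_div hb hβ)

/-- `(a + b) * binEntropy (a / (a + b))`, i.e. `log ((a + b).choose a)` to leading order. -/
noncomputable def binomEntropy (a b : ℝ) : ℝ := (a + b) * log (a + b) - a * log a - b * log b

lemma mul_log_div (a : ℝ) {c : ℝ} (hc : c ≠ 0) : a * log (a / c) = a * log a - a * log c := by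
  rcases eq_or_ne a 0 with rfl | ha
  · simp
  · rw [log_div ha hc]; ring

lemma sq_sub_mul_div_le_neg_binomEntropy {a b r : ℝ} (ha : 0 ≤ a) (hb : 0 ≤ b)
    (hr₀ : 0 < r) (hr₁ : r < 1) :
    (a - (a + b) * r) ^ 2 / (2 * (a + b)) ≤ -binomEntropy a b - a * log r - b * log (1 - r) := by
  rcases (add_nonneg ha hb).eq_or_lt with hn | hn
  · obtain ⟨rfl, rfl⟩ : a = 0 ∧ b = 0 := ⟨by linarith, by linarith⟩
    simp [binomEntropy]
  have h := binary_pinsker ha hb (mul_pos hn hr₀) (mul_pos hn (sub_pos.2 hr₁)) (by ring)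
  rw [mul_log_div a (by positivity), mul_log_div b (mul_pos hn (sub_pos.2 hr₁)).ne',
    log_mul hn.ne' hr₀.ne', log_mul hn.ne' (sub_pos.2 hr₁).ne'] at h
  unfold binomEntropy
  linear_combination h

theorem binomEntropy_add_sq_div_le {x y u v : ℝ} (hx : 0 ≤ x) (hy : 0 ≤ y) (hu : 0 ≤ u)
    (hv : 0 ≤ v) :
    binomEntropy x y + binomEntropy u v + (x * v - y * u) ^ 2 / (2 * (x + y + u + v) ^ 3) ≤
      binomEntropy (x + u) (y + v) := by
  rcases (add_nonneg hx hu).eq_or_lt with hR | hR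
  · obtain ⟨rfl, rfl⟩ : x = 0 ∧ u = 0 := ⟨by linarith, by linarith⟩
    simp [binomEntropy]
  rcases (add_nonneg hy hv).eq_or_lt with hS | hS
  · obtain ⟨rfl, rfl⟩ : y = 0 ∧ v = 0 := ⟨by linarith, by linarith⟩
    simp [binomEntropy]
  set M := x + y + u + v
  have hM0 : 0 < M := by linarith
  have hr₀ : 0 < (x + u) / M := by positivity
  have hr₁ : (x + u) / M < 1 := by rw [div_lt_one hM0]; linarith
  have h1r : 1 - (x + u) / M = (y + v) / M := by field_simp; ring
  have hxy := sq_sub_mul_div_le_neg_binomEntropy hx hy hr₀ hr₁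
  have huv := sq_sub_mul_div_le_neg_binomEntropy hu hv hr₀ hr₁
  rw [show x - (x + y) * ((x + u) / M) = (x * v - y * u) / M by field_simp; ring] at hxy
  rw [show u - (u + v) * ((x + u) / M) = -((x * v - y * u) / M) by field_simp; ring,
    neg_sq] at huv
  rw [h1r, log_div hR.ne' hM0.ne', log_div hS.ne' hM0.ne'] at hxy huv
  have hfirst :
      ((x * v - y * u) / M) ^ 2 / (2 * M) ≤ ((x * v - y * u) / M) ^ 2 / (2 * (x + y)) := by
    rcases (add_nonneg hx hy).eq_or_lt with hn | hn
    · obtain ⟨rfl, rfl⟩ : x = 0 ∧ y = 0 := ⟨by linarith, by linarith⟩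
      simp
    · gcongr; linarith
  have hsecond : 0 ≤ ((x * v - y * u) / M) ^ 2 / (2 * (u + v)) := by positivity
  have hW : (x * v - y * u) ^ 2 / (2 * M ^ 3) = ((x * v - y * u) / M) ^ 2 / (2 * M) := by
    field_simp
  simp only [binomEntropy] at hxy huv ⊢
  rw [hW, show x + u + (y + v) = M by ring]
  linear_combination hfirst + hxy + huv + hsecond

namespace Nat

theorem choose_mul_pow_mul_pow_le (a b : ℕ) :
    (a + b).choose a * a ^ a * b ^ b ≤ (a + b) ^ (a + b) := by
  rw [add_pow]
  refine le_of_eq_of_le ?_ (Finset.single_le_sum (fun k _ => Nat.zero_le _)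
    (Finset.mem_range.2 (show a < a + b + 1 by omega)))
  rw [Nat.add_sub_cancel_left, Nat.cast_id]
  ring

theorem choose_succ_mul_pow_mul_pow_mul (n R S k : ℕ) :
    n.choose (k + 1) * R ^ (k + 1) * S ^ (n - (k + 1)) * ((k + 1) * S) =
      n.choose k * R ^ k * S ^ (n - k) * ((n - k) * R) := by
  rcases lt_or_ge k n with hk | hk
  · have hS : S ^ (n - k) = S ^ (n - (k + 1)) * S := by rw [← pow_succ]; congr 1; omega
    calc n.choose (k + 1) * R ^ (k + 1) * S ^ (n - (k + 1)) * ((k + 1) * S)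
        = n.choose (k + 1) * (k + 1) * R ^ (k + 1) * (S ^ (n - (k + 1)) * S) := by ring
      _ = n.choose k * R ^ k * S ^ (n - k) * ((n - k) * R) := by
        rw [choose_succ_right_eq, ← hS]; ring
  · simp [choose_eq_zero_of_lt (show n < k + 1 by omega), Nat.sub_eq_zero_of_le hk]

theorem choose_mul_pow_mul_pow_sub_le (R S : ℕ) {k : ℕ} (hk : k ≤ R + S) :
    (R + S).choose k * R ^ k * S ^ (R + S - k) ≤ (R + S).choose R * R ^ R * S ^ S := by
  generalize hn : R + S = n at hk ⊢
  set t : ℕ → ℕ := fun k => n.choose k * R ^ k * S ^ (n - k)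
  have up : MonotoneOn t (Set.Iic R) := by
    refine monotoneOn_of_le_succ Set.ordConnected_Iic fun k _ _ hk => ?_
    rw [Order.succ_eq_add_one, Set.mem_Iic] at hk
    refine Nat.le_of_mul_le_mul_right (c := (n - k) * R) ?_ (Nat.mul_pos (by omega) (by omega))
    calc t k * ((n - k) * R) = t (k + 1) * ((k + 1) * S) :=
          (choose_succ_mul_pow_mul_pow_mul n R S k).symm
      _ ≤ t (k + 1) * ((n - k) * R) := by
        refine Nat.mul_le_mul_left _ ?_
        calc (k + 1) * S ≤ R * (n - k) := Nat.mul_le_mul hk (by omega)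
          _ = (n - k) * R := Nat.mul_comm _ _
  have down : AntitoneOn t (Set.Icc R n) := by
    refine antitoneOn_of_succ_le Set.ordConnected_Icc fun k _ hk hk1 => ?_
    rw [Order.succ_eq_add_one, Set.mem_Icc] at hk1
    rw [Set.mem_Icc] at hk
    refine Nat.le_of_mul_le_mul_right (c := (k + 1) * S) ?_ (Nat.mul_pos (by omega) (by omega))
    calc t (k + 1) * ((k + 1) * S) = t k * ((n - k) * R) := choose_succ_mul_pow_mul_pow_mul n R S k
      _ ≤ t k * ((k + 1) * S) := by
        refine Nat.mul_le_mul_left _ ?_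
        calc (n - k) * R ≤ S * (k + 1) := Nat.mul_le_mul (by omega) (by omega)
          _ = (k + 1) * S := Nat.mul_comm _ _
  have htR : t R = n.choose R * R ^ R * S ^ S := by simp [t, ← hn]
  rw [← htR]
  rcases le_total k R with h | h
  · exact up (Set.mem_Iic.2 h) (Set.mem_Iic.2 le_rfl) h
  · exact down (Set.left_mem_Icc.2 (by omega)) ⟨h, hk⟩ h

theorem add_pow_le_succ_mul_choose_mul_pow_mul_pow (R S : ℕ) :
    (R + S) ^ (R + S) ≤ (R + S + 1) * ((R + S).choose R * R ^ R * S ^ S) := by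
  rw [add_pow]
  calc ∑ k ∈ Finset.range (R + S + 1), R ^ k * S ^ (R + S - k) * (R + S).choose k
      ≤ (Finset.range (R + S + 1)).card • ((R + S).choose R * R ^ R * S ^ S) := by
        refine Finset.sum_le_card_nsmul _ _ _ fun k hk => ?_
        rw [mul_comm, ← mul_assoc]
        exact choose_mul_pow_mul_pow_sub_le R S (by simpa [Nat.lt_succ_iff] using hk)
    _ = _ := by rw [Finset.card_range, smul_eq_mul]

end Nat

lemma exp_natCast_mul_log (k : ℕ) : exp (k * log k) = (k : ℝ) ^ k := by
  rcases Nat.eq_zero_or_pos k with rfl | hk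
  · simp
  · rw [exp_nat_mul, exp_log (by exact_mod_cast hk)]

lemma natCast_pow_self_mul_pow_self_pos (a b : ℕ) : 0 < (a : ℝ) ^ a * (b : ℝ) ^ b := by
  exact_mod_cast Nat.mul_pos Nat.pow_self_pos Nat.pow_self_pos

lemma exp_binomEntropy_natCast (a b : ℕ) :
    exp (binomEntropy a b) = ((a + b : ℕ) : ℝ) ^ (a + b) / ((a : ℝ) ^ a * (b : ℝ) ^ b) := by
  rw [binomEntropy, exp_sub, exp_sub, ← Nat.cast_add, exp_natCast_mul_log, exp_natCast_mul_log,
    exp_natCast_mul_log, div_div]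

lemma choose_le_exp_binomEntropy (a b : ℕ) :
    ((a + b).choose a : ℝ) ≤ exp (binomEntropy a b) := by
  rw [exp_binomEntropy_natCast, le_div_iff₀ (natCast_pow_self_mul_pow_self_pos a b),
    ← mul_assoc]
  exact_mod_cast Nat.choose_mul_pow_mul_pow_le a b

lemma exp_binomEntropy_le (a b : ℕ) :
    exp (binomEntropy a b) ≤ (a + b + 1) * ((a + b).choose a : ℝ) := by
  rw [exp_binomEntropy_natCast, div_le_iff₀ (natCast_pow_self_mul_pow_self_pos a b), mul_assoc,
    ← mul_assoc _ (_ ^ a)]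
  exact_mod_cast Nat.add_pow_le_succ_mul_choose_mul_pow_mul_pow a b

theorem choose_mul_choose_div_choose_le (x y u v : ℕ) :
    ((x + y).choose x * (u + v).choose u : ℝ) / (x + u + (y + v)).choose (x + u) ≤
      (x + y + u + v + 1) *
        exp (-((x * v - y * u : ℝ) ^ 2 / (2 * (x + y + u + v) ^ 3))) := by
  have hC : (0 : ℝ) < (x + u + (y + v)).choose (x + u) := by
    exact_mod_cast Nat.choose_pos (Nat.le_add_right _ _)
  have hkey := binomEntropy_add_sq_div_le (x := x) (y := y) (u := u) (v := v) (by positivity)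
    (by positivity) (by positivity) (by positivity)
  rw [div_le_iff₀ hC]
  calc ((x + y).choose x * (u + v).choose u : ℝ)
      ≤ exp (binomEntropy x y) * exp (binomEntropy u v) :=
        mul_le_mul (choose_le_exp_binomEntropy x y) (choose_le_exp_binomEntropy u v)
          (by positivity) (by positivity)
    _ ≤ exp (-((x * v - y * u : ℝ) ^ 2 / (2 * (x + y + u + v) ^ 3))) *
          exp (binomEntropy ↑(x + u) ↑(y + v)) := by
        rw [← exp_add, ← exp_add, Nat.cast_add, Nat.cast_add]
        exact exp_le_exp.2 (by linarith)
    _ ≤ exp (-((x * v - y * u : ℝ) ^ 2 / (2 * (x + y + u + v) ^ 3))) *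
          ((↑(x + u) + ↑(y + v) + 1) * ((x + u + (y + v)).choose (x + u) : ℝ)) :=
        mul_le_mul_of_nonneg_left (exp_binomEntropy_le _ _) (exp_pos _).le
    _ = _ := by push_cast; ring

lemma smul_pt (t u v : ℝ) : t • pt u v = pt (t * u) (t * v) := by
  ext i
  fin_cases i <;> simp [pt]

lemma dist_pt_sq (a b c e : ℝ) : dist (pt a b) (pt c e) ^ 2 = (a - c) ^ 2 + (b - e) ^ 2 := by
  rw [EuclideanSpace.dist_eq, sq_sqrt (by positivity), Fin.sum_univ_two]
  simp [pt, Real.dist_eq, sq_abs]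

theorem infDist_pt_line_sq_le {a b R S : ℝ} (hRS : R + S ≠ 0) :
    Metric.infDist (pt a b) {p | ∃ t : ℝ, p = t • pt R S} ^ 2 ≤
      2 * (a * S - b * R) ^ 2 / (R + S) ^ 2 := by
  have hQ : 0 < R ^ 2 + S ^ 2 := by nlinarith [sq_nonneg (R - S), sq_pos_of_ne_zero hRS]
  set c := (a * R + b * S) / (R ^ 2 + S ^ 2)
  calc Metric.infDist (pt a b) {p | ∃ t : ℝ, p = t • pt R S} ^ 2
      ≤ dist (pt a b) (c • pt R S) ^ 2 := by
        gcongr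
        · exact Metric.infDist_nonneg
        · exact Metric.infDist_le_dist_of_mem ⟨c, rfl⟩
    _ = (a * S - b * R) ^ 2 / (R ^ 2 + S ^ 2) := by
        rw [smul_pt, dist_pt_sq]
        simp only [c]
        field_simp
        ring
    _ ≤ 2 * (a * S - b * R) ^ 2 / (R + S) ^ 2 := by
        rw [div_le_div_iff₀ hQ (by positivity)]
        nlinarith [mul_nonneg (sq_nonneg (a * S - b * R)) (sq_nonneg (R - S))]

theorem binomial_line_estimate (M : ℕ) (hM : 0 < M) (x y R S : ℕ)
    (hRS : R + S = M) (hx : x ≤ R) (hy : y ≤ S) (d : ℝ)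
    (hd : d = Metric.infDist (pt x y)
      {p : EuclideanSpace ℝ (Fin 2) | ∃ t : ℝ, p = t • pt R S}) :
    ((x + y).choose x * (R + S - x - y).choose (R - x) : ℝ) / ((R + S).choose R) ≤
      48 * M * Real.exp (-(d ^ 2) / (4 * M)) := by
  obtain ⟨u, rfl⟩ : ∃ u, R = x + u := ⟨R - x, by omega⟩
  obtain ⟨v, rfl⟩ : ∃ v, S = y + v := ⟨S - y, by omega⟩
  subst hRS
  rw [show x + u + (y + v) - x - y = u + v by omega, Nat.add_sub_cancel_left]
  have hM₁ : (1 : ℝ) ≤ x + y + u + v := by exact_mod_cast (show 1 ≤ x + y + u + v by omega)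
  have hdist : d ^ 2 ≤ 2 * (x * v - y * u : ℝ) ^ 2 / (x + y + u + v) ^ 2 := by
    push_cast at hd
    rw [hd]
    convert infDist_pt_line_sq_le (a := x) (b := y) (R := x + u) (S := y + v) (by linarith)
      using 3 <;> ring
  have hexp : -((x * v - y * u : ℝ) ^ 2 / (2 * (x + y + u + v) ^ 3)) ≤
      -d ^ 2 / (4 * (x + y + u + v)) := by
    rw [neg_div, neg_le_neg_iff]
    calc d ^ 2 / (4 * (x + y + u + v))
        ≤ 2 * (x * v - y * u : ℝ) ^ 2 / (x + y + u + v) ^ 2 / (4 * (x + y + u + v)) := by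
          gcongr
      _ = _ := by field_simp; ring
  refine (choose_mul_choose_div_choose_le x y u v).trans ?_
  push_cast
  rw [show (x : ℝ) + u + (y + v) = x + y + u + v by ring]
  gcongr
  linarith
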